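/- arXiv:2203.12592 — 6 statements merged into one kernel-verified Lean document; each statement's English description precedes it below -/
import Mathlib

section
/- Let A be a nonempty finite set, β > 0, π̃0 : A → ℝ strictly positive, and Δr : A → ℝ. Then the supremum over all nonnegative functions π̃ : A → ℝ of ⟨π̃, Δr⟩ − (1/β)·KL[π̃:π̃0] equals (1/β)·Σ_{a∈A} π̃0(a)·(exp(β·Δr(a)) − 1), and it is attained at π̃(a) = π̃0(a)·exp(β·Δr(a)). -/
/-!
Both the objective and the bound split into sums over `A`, so it suffices to maximise each
summand `x ↦ x t - (x log (x / c) - x + c)` over `x ≥ 0`. With `y = log (x / c)` this is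
`x (t - y + 1) - c`, and `t - y + 1 ≤ exp (t - y) = c exp t / x` gives the bound `c (exp t - 1)`,
with equality exactly when `t = y`, i.e. at `x = c exp t`.
-/

section FenchelYoung

open Real

variable {x c : ℝ}

theorem mul_sub_klTerm_le (hx : 0 ≤ x) (hc : 0 < c) (t : ℝ) :
    x * t - (x * log (x / c) - x + c) ≤ c * (exp t - 1) := by
  rcases hx.eq_or_lt with rfl | hx
  · linarith [mul_pos hc (exp_pos t)]
  have key : t - log (x / c) + 1 ≤ c * exp t / x := by
    have h := add_one_le_exp (t - log (x / c))
    rwa [exp_sub, exp_log (by positivity), div_div_eq_mul_div, mul_comm] at h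
  have h := mul_le_mul_of_nonneg_left key hx.le
  rw [mul_div_cancel₀ _ hx.ne'] at h
  linarith

theorem mul_exp_mul_sub_klTerm_eq (hc : 0 < c) (t : ℝ) :
    c * exp t * t - (c * exp t * log (c * exp t / c) - c * exp t + c) = c * (exp t - 1) := by
  rw [mul_div_cancel_left₀ _ hc.ne', log_exp]
  ring

end FenchelYoung

theorem mul_sub_inv_mul_eq {β : ℝ} (hβ : β ≠ 0) (x r k : ℝ) :
    x * r - 1 / β * k = 1 / β * (x * (β * r) - k) := by
  field_simp

theorem unnormalized_kl_conjugate_general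
    {A : Type*} [Fintype A]
    (β : ℝ) (hβ : 0 < β)
    (π₀ : A → ℝ) (hπ₀pos : ∀ a, 0 < π₀ a)
    (Δr : A → ℝ) :
    (∀ π : A → ℝ, (∀ a, 0 ≤ π a) →
      (∑ a, π a * Δr a)
          - (1 / β) * ∑ a, (π a * Real.log (π a / π₀ a) - π a + π₀ a)
        ≤ (1 / β) * ∑ a, π₀ a * (Real.exp (β * Δr a) - 1)) ∧
    ((∑ a, (π₀ a * Real.exp (β * Δr a)) * Δr a)
          - (1 / β) * ∑ a, ((π₀ a * Real.exp (β * Δr a))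
              * Real.log ((π₀ a * Real.exp (β * Δr a)) / π₀ a)
              - (π₀ a * Real.exp (β * Δr a)) + π₀ a)
        = (1 / β) * ∑ a, π₀ a * (Real.exp (β * Δr a) - 1)) := by
  simp only [Finset.mul_sum, ← Finset.sum_sub_distrib, mul_sub_inv_mul_eq hβ.ne']
  refine ⟨fun π hπ => Finset.sum_le_sum fun a _ => ?_, Finset.sum_congr rfl fun a _ => ?_⟩
  · gcongr
    exact mul_sub_klTerm_le (hπ a) (hπ₀pos a) _
  · rw [mul_exp_mul_sub_klTerm_eq (hπ₀pos a)]

/-- Conjugate of the unnormalized KL divergence: the supremum over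
nonnegative `π̃ : A → ℝ` of `⟨π̃, Δr⟩ - (1/β) KL[π̃:π̃0]` (with
`KL[π̃:π̃0] = ∑ (π̃ log(π̃/π̃0) - π̃ + π̃0)` and the convention `0 log 0 = 0`)
equals `(1/β) ∑ π̃0(a) (exp(β Δr(a)) - 1)`, attained at
`π̃(a) = π̃0(a) exp(β Δr(a))`. -/
theorem unnormalized_kl_conjugate
    {A : Type*} [Fintype A] [Nonempty A]
    (β : ℝ) (hβ : 0 < β)
    (π₀ : A → ℝ) (hπ₀pos : ∀ a, 0 < π₀ a)
    (Δr : A → ℝ) :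
    (∀ π : A → ℝ, (∀ a, 0 ≤ π a) →
      (∑ a, π a * Δr a)
          - (1 / β) * ∑ a, (π a * Real.log (π a / π₀ a) - π a + π₀ a)
        ≤ (1 / β) * ∑ a, π₀ a * (Real.exp (β * Δr a) - 1)) ∧
    ((∑ a, (π₀ a * Real.exp (β * Δr a)) * Δr a)
          - (1 / β) * ∑ a, ((π₀ a * Real.exp (β * Δr a))
              * Real.log ((π₀ a * Real.exp (β * Δr a)) / π₀ a)
              - (π₀ a * Real.exp (β * Δr a)) + π₀ a)
        = (1 / β) * ∑ a, π₀ a * (Real.exp (β * Δr a) - 1)) :=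
  unnormalized_kl_conjugate_general β hβ π₀ hπ₀pos Δr
end

section
/- Let A be a nonempty finite set, β > 0, and π̃, π̃0 : A → ℝ strictly positive. Then the function Δr ↦ ⟨π̃, Δr⟩ − (1/β)·Σ_{a∈A} π̃0(a)·(exp(β·Δr(a)) − 1) over all Δr : A → ℝ attains its maximum uniquely at Δr*(a) = (1/β)·log(π̃(a)/π̃0(a)), and the maximum value equals (1/β)·KL[π̃:π̃0]. -/
/-!
Writing `y = β Δr(a) - log(π̃(a)/π̃₀(a))`, one has `π̃₀(a) exp(β Δr(a)) = π̃(a) exp y`, and the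
gap between `(1/β) KL[π̃:π̃₀]` and the objective becomes `∑ₐ (π̃(a)/β) (exp y - 1 - y)`.
Each summand is nonnegative by `1 + y ≤ exp y` and vanishes only at `y = 0`, which gives the
bound, the maximizer and its uniqueness at once.
-/

open Finset

namespace Real

lemma exp_sub_one_sub_nonneg (y : ℝ) : 0 ≤ exp y - 1 - y := by
  linarith [add_one_le_exp y]

lemma exp_sub_one_sub_eq_zero_iff {y : ℝ} : exp y - 1 - y = 0 ↔ y = 0 := by
  refine ⟨fun h => ?_, fun h => by simp [h]⟩
  by_contra hy
  linarith [add_one_lt_exp hy]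

end Real

lemma kl_term_sub_objective_term_eq {β p q : ℝ} (hβ : β ≠ 0) (hpq : 0 < p / q) (t : ℝ) :
    (1 / β) * (p * Real.log (p / q) - p + q) - (p * t - (1 / β) * (q * (Real.exp (β * t) - 1)))
      = p / β * (Real.exp (β * t - Real.log (p / q)) - 1 - (β * t - Real.log (p / q))) := by
  have hp : p ≠ 0 := by rintro rfl; simp at hpq
  have hq : q ≠ 0 := by rintro rfl; simp at hpq
  rw [Real.exp_sub, Real.exp_log hpq]
  field_simp
  ring

lemma kl_sub_objective_eq_sum {A : Type*} [Fintype A] {β : ℝ} (hβ : β ≠ 0) {π π₀ : A → ℝ}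
    (hpos : ∀ a, 0 < π a / π₀ a) (Δr : A → ℝ) :
    (1 / β) * ∑ a, (π a * Real.log (π a / π₀ a) - π a + π₀ a)
        - ((∑ a, π a * Δr a) - (1 / β) * ∑ a, π₀ a * (Real.exp (β * Δr a) - 1))
      = ∑ a, π a / β * (Real.exp (β * Δr a - Real.log (π a / π₀ a)) - 1
          - (β * Δr a - Real.log (π a / π₀ a))) := by
  simp only [mul_sum, ← sum_sub_distrib]
  exact sum_congr rfl fun a _ => kl_term_sub_objective_term_eq hβ (hpos a) (Δr a)

theorem optimal_kl_reward_perturbation_general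
    {A : Type*} [Fintype A]
    (β : ℝ) (hβ : 0 < β)
    (π π₀ : A → ℝ) (hπpos : ∀ a, 0 < π a) (hπ₀pos : ∀ a, 0 < π₀ a) :
    (∀ Δr : A → ℝ,
      (∑ a, π a * Δr a) - (1 / β) * ∑ a, π₀ a * (Real.exp (β * Δr a) - 1)
        ≤ (1 / β) * ∑ a, (π a * Real.log (π a / π₀ a) - π a + π₀ a)) ∧
    (∀ Δr : A → ℝ,
      ((∑ a, π a * Δr a) - (1 / β) * ∑ a, π₀ a * (Real.exp (β * Δr a) - 1)
          = (1 / β) * ∑ a, (π a * Real.log (π a / π₀ a) - π a + π₀ a)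
        ↔ Δr = fun a => (1 / β) * Real.log (π a / π₀ a))) := by
  have hgap := kl_sub_objective_eq_sum hβ.ne' fun a => div_pos (hπpos a) (hπ₀pos a)
  have hterm_nonneg : ∀ (Δr : A → ℝ) a, 0 ≤ π a / β *
      (Real.exp (β * Δr a - Real.log (π a / π₀ a)) - 1 - (β * Δr a - Real.log (π a / π₀ a))) :=
    fun Δr a => mul_nonneg (div_pos (hπpos a) hβ).le (Real.exp_sub_one_sub_nonneg _)
  constructor
  · intro Δr
    linarith [hgap Δr, sum_nonneg (s := univ) fun a _ => hterm_nonneg Δr a]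
  · intro Δr
    rw [eq_comm, ← sub_eq_zero, hgap Δr, sum_eq_zero_iff_of_nonneg fun a _ => hterm_nonneg Δr a]
    simp only [mem_univ, true_implies, funext_iff]
    refine forall_congr' fun a => ?_
    rw [mul_eq_zero, or_iff_right (div_pos (hπpos a) hβ).ne', Real.exp_sub_one_sub_eq_zero_iff,
      sub_eq_zero, one_div, eq_inv_mul_iff_mul_eq₀ hβ.ne']

/-- The adversary's objective `⟨π̃, Δr⟩ - (1/β) ∑ π̃0 (exp(β Δr) - 1)`
over reward perturbations `Δr : A → ℝ` attains its maximum uniquely at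
`Δr*(a) = (1/β) log(π̃(a)/π̃0(a))`, with maximum value the (scaled) unnormalized
KL divergence `(1/β) KL[π̃:π̃0]`. -/
theorem optimal_kl_reward_perturbation
    {A : Type*} [Fintype A] [Nonempty A]
    (β : ℝ) (hβ : 0 < β)
    (π π₀ : A → ℝ) (hπpos : ∀ a, 0 < π a) (hπ₀pos : ∀ a, 0 < π₀ a) :
    (∀ Δr : A → ℝ,
      (∑ a, π a * Δr a) - (1 / β) * ∑ a, π₀ a * (Real.exp (β * Δr a) - 1)
        ≤ (1 / β) * ∑ a, (π a * Real.log (π a / π₀ a) - π a + π₀ a)) ∧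
    (∀ Δr : A → ℝ,
      ((∑ a, π a * Δr a) - (1 / β) * ∑ a, π₀ a * (Real.exp (β * Δr a) - 1)
          = (1 / β) * ∑ a, (π a * Real.log (π a / π₀ a) - π a + π₀ a)
        ↔ Δr = fun a => (1 / β) * Real.log (π a / π₀ a))) :=
  optimal_kl_reward_perturbation_general β hβ π π₀ hπpos hπ₀pos
end

section
/- Let A be a nonempty finite set, β > 0, α > 1, and π̃, π̃0 : A → ℝ strictly positive. Define the α-conjugate penalty Ω*_α(Δr) = (1/(β·α))·Σ_{a∈A} π̃0(a)·((max(0, 1 + (α−1)·β·Δr(a)))^{α/(α−1)} − 1). Then the function Δr ↦ ⟨π̃, Δr⟩ − Ω*_α(Δr) over all Δr : A → ℝ attains its maximum at Δr*(a) = (1/β)·log_α(π̃(a)/π̃0(a)). -/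
/-!
The objective splits into a sum over actions, so it suffices to maximise each summand
`p x - (q / (β α)) ((max 0 (1 + (α - 1) β x)) ^ γ - 1)`, where `γ = α / (α - 1)` is the Hölder
conjugate of `α`. In the variable `t = 1 + (α - 1) β x` the summand is, up to a positive factor
and an additive constant, `t u - (max 0 t) ^ γ / γ` with `u = p / q`. By Young's inequality this
is at most `u ^ α / α`, the Legendre transform of `s ↦ s ^ γ / γ` at `u`, with equality at
`t = u ^ (α - 1)`, which is exactly the point `Δr*`.
-/

open Finset

namespace Real

variable {α γ : ℝ}

theorem mul_sub_max_rpow_div_le (h : α.HolderConjugate γ) {u : ℝ} (hu : 0 ≤ u) (t : ℝ) :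
    t * u - max 0 t ^ γ / γ ≤ u ^ α / α := by
  have young := young_inequality_of_nonneg (le_max_left 0 t) hu h.symm
  have : t * u ≤ max 0 t * u := mul_le_mul_of_nonneg_right (le_max_right 0 t) hu
  linarith

theorem rpow_sub_one_mul_sub_max_rpow_div (h : α.HolderConjugate γ) {u : ℝ} (hu : 0 < u) :
    u ^ (α - 1) * u - max 0 (u ^ (α - 1)) ^ γ / γ = u ^ α / α := by
  have hpow : (u ^ (α - 1)) ^ γ = u ^ α := by
    rw [← rpow_mul hu.le, h.sub_one_mul_conj]
  rw [max_eq_right (rpow_nonneg hu.le _), hpow, rpow_sub_one hu.ne', div_mul_cancel₀ _ hu.ne',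
    div_eq_mul_inv _ γ, ← h.one_sub_inv]
  ring

end Real

noncomputable def alphaGain (β α p q x : ℝ) : ℝ :=
  p * x - 1 / (β * α) * (q * ((max 0 (1 + (α - 1) * β * x)) ^ (α / (α - 1)) - 1))

theorem alphaGain_eq {β α : ℝ} (hβ : 0 < β) (hα : 1 < α) (p : ℝ) {q : ℝ} (hq : 0 < q) (x : ℝ) :
    alphaGain β α p q x
      = q / ((α - 1) * β) * ((1 + (α - 1) * β * x) * (p / q)
          - max 0 (1 + (α - 1) * β * x) ^ (α / (α - 1)) / (α / (α - 1)))
        + (q / (β * α) - p / ((α - 1) * β)) := by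
  have : α - 1 ≠ 0 := by linarith
  have : α ≠ 0 := by linarith
  unfold alphaGain
  field_simp
  ring

theorem alphaGain_le {β α p q : ℝ} (hβ : 0 < β) (hα : 1 < α) (hp : 0 < p) (hq : 0 < q) (x : ℝ) :
    alphaGain β α p q x ≤ alphaGain β α p q ((1 / β) * ((p / q) ^ (α - 1) - 1) / (α - 1)) := by
  have hconj : α.HolderConjugate (α / (α - 1)) := .conjExponent hα
  have hu : 0 < p / q := div_pos hp hq
  have hstar :
      1 + (α - 1) * β * ((1 / β) * ((p / q) ^ (α - 1) - 1) / (α - 1)) = (p / q) ^ (α - 1) := by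
    have : α - 1 ≠ 0 := by linarith
    field_simp
    ring
  rw [alphaGain_eq hβ hα p hq, alphaGain_eq hβ hα p hq, hstar,
    Real.rpow_sub_one_mul_sub_max_rpow_div hconj hu]
  have hc : 0 ≤ q / ((α - 1) * β) := div_nonneg hq.le (mul_pos (by linarith) hβ).le
  exact add_le_add_left (mul_le_mul_of_nonneg_left
    (Real.mul_sub_max_rpow_div_le hconj hu.le _) hc) _

theorem alpha_conjugate_maximizer_general
    {A : Type*} [Fintype A]
    (β : ℝ) (hβ : 0 < β)
    (α : ℝ) (hα : 1 < α)
    (π π₀ : A → ℝ) (hπpos : ∀ a, 0 < π a) (hπ₀pos : ∀ a, 0 < π₀ a) :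
    ∀ Δr : A → ℝ,
      (∑ a, π a * Δr a)
          - (1 / (β * α)) * ∑ a, π₀ a *
              ((max 0 (1 + (α - 1) * β * Δr a)) ^ (α / (α - 1)) - 1)
        ≤ (∑ a, π a * ((1 / β) * ((π a / π₀ a) ^ (α - 1) - 1) / (α - 1)))
          - (1 / (β * α)) * ∑ a, π₀ a *
              ((max 0 (1 + (α - 1) * β *
                  ((1 / β) * ((π a / π₀ a) ^ (α - 1) - 1) / (α - 1))))
                ^ (α / (α - 1)) - 1) := by
  intro Δr
  rw [mul_sum, mul_sum, ← sum_sub_distrib, ← sum_sub_distrib]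
  exact sum_le_sum fun a _ => alphaGain_le hβ hα (hπpos a) (hπ₀pos a) (Δr a)

/-- For α > 1, the adversary's objective
`⟨π̃, Δr⟩ - Ω*_α(Δr)` with the α-conjugate penalty
`Ω*_α(Δr) = (1/(β α)) ∑ π̃0(a) ((max(0, 1 + (α-1) β Δr(a)))^(α/(α-1)) - 1)`
attains its maximum over `Δr : A → ℝ` at
`Δr*(a) = (1/β) log_α(π̃(a)/π̃0(a))`, where `log_α(u) = (u^(α-1) - 1)/(α-1)`. -/
theorem alpha_conjugate_maximizer
    {A : Type*} [Fintype A] [Nonempty A]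
    (β : ℝ) (hβ : 0 < β)
    (α : ℝ) (hα : 1 < α)
    (π π₀ : A → ℝ) (hπpos : ∀ a, 0 < π a) (hπ₀pos : ∀ a, 0 < π₀ a) :
    ∀ Δr : A → ℝ,
      (∑ a, π a * Δr a)
          - (1 / (β * α)) * ∑ a, π₀ a *
              ((max 0 (1 + (α - 1) * β * Δr a)) ^ (α / (α - 1)) - 1)
        ≤ (∑ a, π a * ((1 / β) * ((π a / π₀ a) ^ (α - 1) - 1) / (α - 1)))
          - (1 / (β * α)) * ∑ a, π₀ a *
              ((max 0 (1 + (α - 1) * β *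
                  ((1 / β) * ((π a / π₀ a) ^ (α - 1) - 1) / (α - 1))))
                ^ (α / (α - 1)) - 1) :=
  alpha_conjugate_maximizer_general β hβ α hα π π₀ hπpos hπ₀pos
end

section
/- Let A be a nonempty finite set, β > 0, α ∈ ℝ with α ∉ {0, 1}, π̃0 : A → ℝ strictly positive, and Δr : A → ℝ satisfying 1 + (α−1)·β·Δr(a) > 0 for all a ∈ A. Then the supremum over all strictly positive functions π̃ : A → ℝ of ⟨π̃, Δr⟩ − (1/β)·D_α[π̃0:π̃] equals (1/(β·α))·Σ_{a∈A} π̃0(a)·((1 + (α−1)·β·Δr(a))^{α/(α−1)} − 1), and it is attained at π̃(a) = π̃0(a)·(1 + (α−1)·β·Δr(a))^{1/(α−1)}. -/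
/-!
The problem separates over `a`. Writing `c = 1 + (α - 1) β Δr(a)`, the `a`-th term of the
objective at `π̃(a) = t` equals its claimed maximum minus `1/β` times the α-divergence summand
between `π̃0(a) c^(α/(α-1))` and `t c`; the powers of `c` cancel in its geometric-mean part.
That summand is nonnegative (weighted AM–GM for `0 < α < 1`, Bernoulli's inequality otherwise)
and vanishes when its two arguments agree, which happens at `t = π̃0(a) c^(1/(α-1))`.
-/

section

open Real

lemma one_sub_mul_add_mul_le_rpow_mul_rpow {α x y : ℝ} (hα : 1 ≤ α) (hx : 0 < x) (hy : 0 < y) :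
    (1 - α) * x + α * y ≤ x ^ (1 - α) * y ^ α := by
  have hbern : 1 + α * (y / x - 1) ≤ (1 + (y / x - 1)) ^ α :=
    one_add_mul_self_le_rpow_one_add (by linarith [div_pos hy hx]) hα
  rw [add_sub_cancel, div_rpow hy.le hx.le] at hbern
  calc (1 - α) * x + α * y = x * (1 + α * (y / x - 1)) := by field_simp; ring
    _ ≤ x * (y ^ α / x ^ α) := by gcongr
    _ = x ^ (1 - α) * y ^ α := by
      rw [rpow_sub hx, rpow_one]; field_simp

/-- The summand of `D_α[x:y]`, i.e. `x = π̃0(a)` and `y = π̃(a)`. -/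
noncomputable def alphaDivTerm (α x y : ℝ) : ℝ :=
  ((1 - α) * x + α * y - x ^ (1 - α) * y ^ α) / (α * (1 - α))

lemma alphaDivTerm_one_sub (α x y : ℝ) : alphaDivTerm (1 - α) y x = alphaDivTerm α x y := by
  simp only [alphaDivTerm, sub_sub_cancel]
  ring_nf

lemma alphaDivTerm_nonneg_of_one_lt {α x y : ℝ} (hα : 1 < α) (hx : 0 < x) (hy : 0 < y) :
    0 ≤ alphaDivTerm α x y :=
  div_nonneg_of_nonpos (by linarith [one_sub_mul_add_mul_le_rpow_mul_rpow hα.le hx hy])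
    (mul_nonpos_of_nonneg_of_nonpos (by linarith) (by linarith))

lemma alphaDivTerm_nonneg {α x y : ℝ} (hα0 : α ≠ 0) (hα1 : α ≠ 1) (hx : 0 < x) (hy : 0 < y) :
    0 ≤ alphaDivTerm α x y := by
  rcases lt_or_gt_of_ne hα0 with hneg | hpos
  · rw [← alphaDivTerm_one_sub]
    exact alphaDivTerm_nonneg_of_one_lt (by linarith) hy hx
  rcases lt_or_gt_of_ne hα1 with hlt | hgt
  · have hgm := geom_mean_le_arith_mean2_weighted (sub_nonneg.2 hlt.le) hpos.le hx.le hy.le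
      (by ring)
    exact div_nonneg (by linarith) (mul_nonneg hpos.le (by linarith))
  · exact alphaDivTerm_nonneg_of_one_lt hgt hx hy

lemma alphaDivTerm_self (α : ℝ) {x : ℝ} (hx : 0 < x) : alphaDivTerm α x x = 0 := by
  rw [alphaDivTerm, ← rpow_add hx, sub_add_cancel, rpow_one]
  ring

lemma rpow_one_div_sub_one_mul_self {α c : ℝ} (hα1 : α ≠ 1) (hc : 0 < c) :
    c ^ (1 / (α - 1)) * c = c ^ (α / (α - 1)) := by
  have hα1' : α - 1 ≠ 0 := sub_ne_zero.2 hα1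
  rw [← rpow_add_one hc.ne']
  congr 1
  field_simp
  ring

lemma conjugate_objective_eq_sub_alphaDivTerm {β α p t d : ℝ} (hβ : β ≠ 0) (hα0 : α ≠ 0)
    (hα1 : α ≠ 1) (hp : 0 < p) (ht : 0 < t) (hc : 0 < 1 + (α - 1) * β * d) :
    t * d - 1 / β * (1 / (α * (1 - α)) * ((1 - α) * p + α * t - p ^ (1 - α) * t ^ α))
      = 1 / (β * α) * (p * ((1 + (α - 1) * β * d) ^ (α / (α - 1)) - 1))
        - alphaDivTerm α (p * (1 + (α - 1) * β * d) ^ (α / (α - 1)))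
            (t * (1 + (α - 1) * β * d)) / β := by
  set c := 1 + (α - 1) * β * d with hc_def
  have hα1' : α - 1 ≠ 0 := sub_ne_zero.2 hα1
  have hcc : c ^ (α / (α - 1) * (1 - α)) * c ^ α = 1 := by
    rw [← rpow_add hc, show α / (α - 1) * (1 - α) + α = 0 by field_simp; ring, rpow_zero]
  have hprod : (p * c ^ (α / (α - 1))) ^ (1 - α) * (t * c) ^ α = p ^ (1 - α) * t ^ α := by
    rw [mul_rpow hp.le (by positivity), mul_rpow ht.le hc.le, ← rpow_mul hc.le]
    linear_combination (p ^ (1 - α) * t ^ α) * hcc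
  rw [alphaDivTerm, hprod, hc_def]
  field_simp
  ring

end

theorem alpha_divergence_conjugate_general
    {A : Type*} [Fintype A]
    (β : ℝ) (hβ : 0 < β)
    (α : ℝ) (hα0 : α ≠ 0) (hα1 : α ≠ 1)
    (π₀ : A → ℝ) (hπ₀pos : ∀ a, 0 < π₀ a)
    (Δr : A → ℝ) (hΔr : ∀ a, 0 < 1 + (α - 1) * β * Δr a) :
    (∀ π : A → ℝ, (∀ a, 0 < π a) →
      (∑ a, π a * Δr a)
          - (1 / β) * ((1 / (α * (1 - α))) *
              ∑ a, ((1 - α) * π₀ a + α * π a - π₀ a ^ (1 - α) * π a ^ α))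
        ≤ (1 / (β * α)) * ∑ a, π₀ a * ((1 + (α - 1) * β * Δr a) ^ (α / (α - 1)) - 1)) ∧
    ((∑ a, (π₀ a * (1 + (α - 1) * β * Δr a) ^ (1 / (α - 1))) * Δr a)
          - (1 / β) * ((1 / (α * (1 - α))) *
              ∑ a, ((1 - α) * π₀ a
                + α * (π₀ a * (1 + (α - 1) * β * Δr a) ^ (1 / (α - 1)))
                - π₀ a ^ (1 - α)
                  * (π₀ a * (1 + (α - 1) * β * Δr a) ^ (1 / (α - 1))) ^ α))
        = (1 / (β * α)) * ∑ a, π₀ a * ((1 + (α - 1) * β * Δr a) ^ (α / (α - 1)) - 1)) := by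
  constructor
  · intro π hπ
    rw [Finset.mul_sum, Finset.mul_sum, Finset.mul_sum, ← Finset.sum_sub_distrib]
    refine Finset.sum_le_sum fun a _ => ?_
    rw [conjugate_objective_eq_sub_alphaDivTerm hβ.ne' hα0 hα1 (hπ₀pos a) (hπ a) (hΔr a)]
    exact sub_le_self _ <| div_nonneg (alphaDivTerm_nonneg hα0 hα1
      (mul_pos (hπ₀pos a) (Real.rpow_pos_of_pos (hΔr a) _)) (mul_pos (hπ a) (hΔr a))) hβ.le
  · rw [Finset.mul_sum, Finset.mul_sum, Finset.mul_sum, ← Finset.sum_sub_distrib]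
    refine Finset.sum_congr rfl fun a _ => ?_
    rw [conjugate_objective_eq_sub_alphaDivTerm hβ.ne' hα0 hα1 (hπ₀pos a)
        (mul_pos (hπ₀pos a) (Real.rpow_pos_of_pos (hΔr a) _)) (hΔr a),
      mul_assoc (π₀ a), rpow_one_div_sub_one_mul_self hα1 (hΔr a),
      alphaDivTerm_self _ (mul_pos (hπ₀pos a) (Real.rpow_pos_of_pos (hΔr a) _)), zero_div, sub_zero]

/-- Conjugate of the (unnormalized) α-divergence
`D_α[π̃0:π̃] = (1/(α(1-α))) ∑ ((1-α) π̃0(a) + α π̃(a) - π̃0(a)^(1-α) π̃(a)^α)`: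
for `Δr` with `1 + (α-1) β Δr(a) > 0` for all `a`, the supremum over strictly
positive `π̃ : A → ℝ` of `⟨π̃, Δr⟩ - (1/β) D_α[π̃0:π̃]` equals
`(1/(β α)) ∑ π̃0(a) ((1 + (α-1) β Δr(a))^(α/(α-1)) - 1)`, attained at
`π̃(a) = π̃0(a) (1 + (α-1) β Δr(a))^(1/(α-1))`. -/
theorem alpha_divergence_conjugate
    {A : Type*} [Fintype A] [Nonempty A]
    (β : ℝ) (hβ : 0 < β)
    (α : ℝ) (hα0 : α ≠ 0) (hα1 : α ≠ 1)
    (π₀ : A → ℝ) (hπ₀pos : ∀ a, 0 < π₀ a)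
    (Δr : A → ℝ) (hΔr : ∀ a, 0 < 1 + (α - 1) * β * Δr a) :
    (∀ π : A → ℝ, (∀ a, 0 < π a) →
      (∑ a, π a * Δr a)
          - (1 / β) * ((1 / (α * (1 - α))) *
              ∑ a, ((1 - α) * π₀ a + α * π a - π₀ a ^ (1 - α) * π a ^ α))
        ≤ (1 / (β * α)) * ∑ a, π₀ a * ((1 + (α - 1) * β * Δr a) ^ (α / (α - 1)) - 1)) ∧
    ((∑ a, (π₀ a * (1 + (α - 1) * β * Δr a) ^ (1 / (α - 1))) * Δr a)
          - (1 / β) * ((1 / (α * (1 - α))) *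
              ∑ a, ((1 - α) * π₀ a
                + α * (π₀ a * (1 + (α - 1) * β * Δr a) ^ (1 / (α - 1)))
                - π₀ a ^ (1 - α)
                  * (π₀ a * (1 + (α - 1) * β * Δr a) ^ (1 / (α - 1))) ^ α))
        = (1 / (β * α)) * ∑ a, π₀ a * ((1 + (α - 1) * β * Δr a) ^ (α / (α - 1)) - 1)) :=
  alpha_divergence_conjugate_general β hβ α hα0 hα1 π₀ hπ₀pos Δr hΔr
end

section
/- Let A be a nonempty finite set, β > 0, α > 1, π0 a strictly positive probability distribution on A, π a strictly positive probability distribution on A, and r, Δr : A → ℝ. If Σ_{a∈A} π0(a)·(max(0, 1 + (α−1)·β·Δr(a)))^{α/(α−1)} ≤ Σ_{a∈A} π0(a)^{1−α}·π(a)^α, then ⟨π, Δr⟩ ≤ (α/β)·D_α[π0:π]; consequently ⟨π, r − Δr⟩ ≥ ⟨π, r⟩ − (α/β)·D_α[π0:π]. -/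
/-! Put `x a = max 0 (1 + (α - 1) β Δr a)`. Young's inequality with the conjugate exponents
`α / (α - 1)` and `α`, weighted by `π0 a`, gives
`⟨π, x⟩ ≤ ((α - 1) / α) ∑ π0 x ^ (α / (α - 1)) + (1 / α) ∑ π0 ^ (1 - α) π ^ α`, and the
feasibility constraint bounds the first sum by the second. Since `x ≥ 1 + (α - 1) β Δr` and `π` is
a probability vector, `1 + (α - 1) β ⟨π, Δr⟩ ≤ ∑ π0 ^ (1 - α) π ^ α`, which rearranges to the
claim. -/

open Finset

namespace Real

/-- Young's inequality with weight `w`: split `a * b` as `(a * w ^ p⁻¹) * (b * w ^ (-p⁻¹))`. -/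
theorem young_inequality_weighted {p q w a b : ℝ} (hpq : p.HolderConjugate q)
    (hw : 0 < w) (ha : 0 ≤ a) (hb : 0 ≤ b) :
    a * b ≤ w * a ^ p / p + w ^ (1 - q) * b ^ q / q := by
  have hp : p ≠ 0 := hpq.ne_zero
  have hcancel : w ^ p⁻¹ * w ^ (-p⁻¹) = 1 := by rw [← rpow_add hw, add_neg_cancel, rpow_zero]
  have hexp : -p⁻¹ * q = 1 - q := by
    have := hpq.symm.sub_one_mul_conj
    field_simp
    linarith
  have young := young_inequality_of_nonneg (mul_nonneg ha (rpow_nonneg hw.le p⁻¹))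
    (mul_nonneg hb (rpow_nonneg hw.le (-p⁻¹))) hpq
  rwa [mul_mul_mul_comm, hcancel, mul_one, mul_rpow ha (by positivity),
    mul_rpow hb (by positivity), ← rpow_mul hw.le, ← rpow_mul hw.le, inv_mul_cancel₀ hp,
    rpow_one, hexp, mul_comm (a ^ p), mul_comm (b ^ q)] at young

end Real

theorem Finset.sum_mul_le_young_weighted {ι : Type*} (s : Finset ι) {p q : ℝ}
    (hpq : p.HolderConjugate q) {w f g : ι → ℝ} (hw : ∀ i ∈ s, 0 < w i)
    (hf : ∀ i ∈ s, 0 ≤ f i) (hg : ∀ i ∈ s, 0 ≤ g i) :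
    ∑ i ∈ s, f i * g i
      ≤ (∑ i ∈ s, w i * f i ^ p) / p + (∑ i ∈ s, w i ^ (1 - q) * g i ^ q) / q := by
  rw [sum_div, sum_div, ← sum_add_distrib]
  exact sum_le_sum fun i hi => Real.young_inequality_weighted hpq (hw i hi) (hf i hi) (hg i hi)

theorem alpha_robustness_inequality_general
    {A : Type*} [Fintype A]
    (β : ℝ) (hβ : 0 < β)
    (α : ℝ) (hα : 1 < α)
    (π0 π : A → ℝ) (hπ0pos : ∀ a, 0 < π0 a) (hπpos : ∀ a, 0 < π a)
    (hπsum : ∑ a, π a = 1)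
    (r Δr : A → ℝ)
    (hfeas : ∑ a, π0 a * (max 0 (1 + (α - 1) * β * Δr a)) ^ (α / (α - 1))
        ≤ ∑ a, π0 a ^ (1 - α) * π a ^ α) :
    (∑ a, π a * Δr a)
        ≤ (α / β) * ((1 / (α * (α - 1))) * ((∑ a, π0 a ^ (1 - α) * π a ^ α) - 1)) ∧
    (∑ a, π a * (r a - Δr a))
        ≥ (∑ a, π a * r a)
          - (α / β) * ((1 / (α * (α - 1))) * ((∑ a, π0 a ^ (1 - α) * π a ^ α) - 1)) := by
  set S := ∑ a, π0 a ^ (1 - α) * π a ^ α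
  set x := fun a => max 0 (1 + (α - 1) * β * Δr a)
  have hpq : (α / (α - 1)).HolderConjugate α := (Real.HolderConjugate.conjExponent hα).symm
  have hmean : ∑ a, π a * (1 + (α - 1) * β * Δr a) = 1 + (α - 1) * β * ∑ a, π a * Δr a := by
    simp only [mul_add, mul_one, sum_add_distrib, hπsum, mul_left_comm (π _), ← mul_sum]
  have hmain : 1 + (α - 1) * β * ∑ a, π a * Δr a ≤ S :=
    calc 1 + (α - 1) * β * ∑ a, π a * Δr a
        ≤ ∑ a, x a * π a := hmean ▸ sum_le_sum fun a _ => by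
          rw [mul_comm]; exact mul_le_mul_of_nonneg_right (le_max_right _ _) (hπpos a).le
      _ ≤ (∑ a, π0 a * x a ^ (α / (α - 1))) / (α / (α - 1)) + S / α :=
          sum_mul_le_young_weighted _ hpq (fun a _ => hπ0pos a) (fun a _ => le_max_left _ _)
            (fun a _ => (hπpos a).le)
      _ ≤ S / (α / (α - 1)) + S / α := by gcongr
      _ = S := by
          rw [div_eq_mul_inv S, div_eq_mul_inv S, ← mul_add, hpq.inv_add_inv_eq_one, mul_one]
  have hbound : ∑ a, π a * Δr a ≤ (α / β) * ((1 / (α * (α - 1))) * (S - 1)) := by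
    rw [show (α / β) * ((1 / (α * (α - 1))) * (S - 1)) = (S - 1) / ((α - 1) * β) by
      field_simp, le_div_iff₀ (mul_pos (by linarith) hβ)]
    linarith
  refine ⟨hbound, ?_⟩
  have hsplit : ∑ a, π a * (r a - Δr a) = ∑ a, π a * r a - ∑ a, π a * Δr a := by
    simp only [mul_sub, sum_sub_distrib]
  linarith

/-- Robustness of α-divergence regularized policies (α > 1): if
the perturbation `Δr` satisfies the feasibility constraint
`∑ π0(a) (max(0, 1 + (α-1) β Δr(a)))^(α/(α-1)) ≤ ∑ π0(a)^(1-α) π(a)^α`, then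
`⟨π, Δr⟩ ≤ (α/β) D_α[π0:π]`, and hence
`⟨π, r - Δr⟩ ≥ ⟨π, r⟩ - (α/β) D_α[π0:π]`, where
`D_α[π0:π] = (1/(α(α-1))) (∑ π0(a)^(1-α) π(a)^α - 1)`. -/
theorem alpha_robustness_inequality
    {A : Type*} [Fintype A] [Nonempty A]
    (β : ℝ) (hβ : 0 < β)
    (α : ℝ) (hα : 1 < α)
    (π0 π : A → ℝ) (hπ0pos : ∀ a, 0 < π0 a) (hπpos : ∀ a, 0 < π a)
    (hπ0sum : ∑ a, π0 a = 1) (hπsum : ∑ a, π a = 1)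
    (r Δr : A → ℝ)
    (hfeas : ∑ a, π0 a * (max 0 (1 + (α - 1) * β * Δr a)) ^ (α / (α - 1))
        ≤ ∑ a, π0 a ^ (1 - α) * π a ^ α) :
    (∑ a, π a * Δr a)
        ≤ (α / β) * ((1 / (α * (α - 1))) * ((∑ a, π0 a ^ (1 - α) * π a ^ α) - 1)) ∧
    (∑ a, π a * (r a - Δr a))
        ≥ (∑ a, π a * r a)
          - (α / β) * ((1 / (α * (α - 1))) * ((∑ a, π0 a ^ (1 - α) * π a ^ α) - 1)) :=
  alpha_robustness_inequality_general β hβ α hα π0 π hπ0pos hπpos hπsum r Δr hfeas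
end

section
/- Let A be a nonempty finite set, β > 0, α ∈ ℝ with α ∉ {0, 1}, π0 a strictly positive probability distribution on A, Q : A → ℝ, and ψ ∈ ℝ. Suppose 1 + β·(α−1)·(Q(a) − ψ) > 0 for every a ∈ A and that π*(a) = π0(a)·(1 + β·(α−1)·(Q(a) − ψ))^{1/(α−1)} defines a probability distribution on A (i.e., Σ_{a∈A} π*(a) = 1). Then π* maximizes ⟨π, Q⟩ − (1/β)·D_α[π0:π] over all strictly positive probability distributions π on A. -/
/-!
For `α ∉ {0, 1}` the map `x ↦ x ^ α / (α (α - 1))` is convex on `(0, ∞)`, so the objective is a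
sum of strictly concave functions of the coordinates `π a`, corrected by a linear term. With the
Lagrange multiplier `l = ψ - 1 / (β (α - 1))` of the constraint `∑ π = 1`, the choice of `π*` makes
the derivative of the `a`-th summand of the Lagrangian vanish at `π* a`; the tangent-line
inequality then shows that each summand is maximized there, and summing gives the claim.
-/

open Finset

namespace Real

lemma one_add_mul_sub_one_le_rpow_of_neg {t p : ℝ} (ht : 0 < t) (hp : p < 0) :
    1 + p * (t - 1) ≤ t ^ p := by
  have hlog : log t ≤ t - 1 := log_le_sub_one_of_pos ht
  calc 1 + p * (t - 1) ≤ p * log t + 1 := by nlinarith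
    _ ≤ exp (p * log t) := add_one_le_exp _
    _ = t ^ p := by rw [rpow_def_of_pos ht, mul_comm]

/-- Bernoulli's inequality for all real exponents, with the sign of `α (α - 1)` absorbed. -/
lemma rpow_sub_one_sub_mul_div_nonneg {α t : ℝ} (hα0 : α ≠ 0) (hα1 : α ≠ 1) (ht : 0 < t) :
    0 ≤ (t ^ α - 1 - α * (t - 1)) / (α * (α - 1)) := by
  have hs : -1 ≤ t - 1 := by linarith
  have ht' : t = 1 + (t - 1) := by ring
  rcases lt_or_gt_of_ne hα0 with hneg | hpos
  · have := one_add_mul_sub_one_le_rpow_of_neg ht hneg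
    exact div_nonneg (by linarith) (by nlinarith)
  rcases lt_or_gt_of_ne hα1 with hlt | hgt
  · have := rpow_one_add_le_one_add_mul_self hs hpos.le hlt.le
    rw [← ht'] at this
    exact div_nonneg_of_nonpos (by linarith) (by nlinarith)
  · have := one_add_mul_self_le_rpow_one_add hs hgt.le
    rw [← ht'] at this
    exact div_nonneg (by linarith) (by nlinarith)

lemma rpow_div_tangent_le {α x y : ℝ} (hα0 : α ≠ 0) (hα1 : α ≠ 1) (hx : 0 < x) (hy : 0 < y) :
    y ^ α / (α * (α - 1)) + y ^ (α - 1) / (α - 1) * (x - y) ≤ x ^ α / (α * (α - 1)) := by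
  have hyα : 0 < y ^ α := rpow_pos_of_pos hy α
  have hbern := mul_nonneg hyα.le (rpow_sub_one_sub_mul_div_nonneg hα0 hα1 (div_pos hx hy))
  have hdiff : y ^ α * (((x / y) ^ α - 1 - α * (x / y - 1)) / (α * (α - 1)))
      = x ^ α / (α * (α - 1)) - (y ^ α / (α * (α - 1)) + y ^ (α - 1) / (α - 1) * (x - y)) := by
    rw [div_rpow hx.le hy.le, rpow_sub hy, rpow_one]
    field_simp
    ring
  linarith

lemma mul_sub_mul_rpow_div_le {α c r x y : ℝ} (hα0 : α ≠ 0) (hα1 : α ≠ 1) (hc : 0 ≤ c)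
    (hx : 0 < x) (hy : 0 < y) (hr : r = c * (y ^ (α - 1) / (α - 1))) :
    x * r - c * (x ^ α / (α * (α - 1))) ≤ y * r - c * (y ^ α / (α * (α - 1))) := by
  have := mul_le_mul_of_nonneg_left (rpow_div_tangent_le hα0 hα1 hx hy) hc
  rw [hr]
  nlinarith

lemma rpow_one_sub_mul_mul_rpow_one_div_sub_one_rpow {α p u : ℝ} (hα1 : α ≠ 1) (hp : 0 < p)
    (hu : 0 < u) : p ^ (1 - α) * (p * u ^ (1 / (α - 1))) ^ (α - 1) = u := by
  rw [mul_rpow hp.le (rpow_nonneg hu.le _), ← rpow_mul hu.le,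
    one_div_mul_cancel (sub_ne_zero.mpr hα1), rpow_one, ← mul_assoc, ← rpow_add hp]
  norm_num

end Real

section Objective

variable {A : Type*} [Fintype A]

/-- The α-regularized objective `⟨π, Q⟩ - (1/β) D_α[π0 : π]`. -/
noncomputable def alphaRegObjective (β α : ℝ) (π0 Q π : A → ℝ) : ℝ :=
  (∑ a, π a * Q a) - (1 / β) * ((1 / (α * (α - 1))) * ((∑ a, π0 a ^ (1 - α) * π a ^ α) - 1))

/-- On the simplex the objective differs by a constant from the Lagrangian with multiplier `l`. -/
lemma alphaRegObjective_eq_sum_add (β α l : ℝ) (π0 Q : A → ℝ) {π : A → ℝ} (hπ : ∑ a, π a = 1) :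
    alphaRegObjective β α π0 Q π
      = (∑ a, (π a * (Q a - l) - π0 a ^ (1 - α) / β * (π a ^ α / (α * (α - 1)))))
        + l + 1 / (β * (α * (α - 1))) := by
  have hterm : ∀ a, π a * (Q a - l) - π0 a ^ (1 - α) / β * (π a ^ α / (α * (α - 1)))
      = π a * Q a - 1 / (β * (α * (α - 1))) * (π0 a ^ (1 - α) * π a ^ α) - l * π a := fun a => by
    field_simp
    ring
  simp only [alphaRegObjective, hterm, sum_sub_distrib, ← mul_sum, hπ]
  field_simp
  ring

end Objective

theorem alpha_regularized_optimal_policy_general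
    {A : Type*} [Fintype A]
    (β : ℝ) (hβ : 0 < β)
    (α : ℝ) (hα0 : α ≠ 0) (hα1 : α ≠ 1)
    (π0 : A → ℝ) (hπ0pos : ∀ a, 0 < π0 a)
    (Q : A → ℝ) (ψ : ℝ)
    (hpos : ∀ a, 0 < 1 + β * (α - 1) * (Q a - ψ))
    (hnorm : ∑ a, π0 a * (1 + β * (α - 1) * (Q a - ψ)) ^ (1 / (α - 1)) = 1) :
    ∀ π : A → ℝ, (∀ a, 0 < π a) → ∑ a, π a = 1 →
      (∑ a, π a * Q a)
          - (1 / β) * ((1 / (α * (α - 1))) * ((∑ a, π0 a ^ (1 - α) * π a ^ α) - 1))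
        ≤ (∑ a, (π0 a * (1 + β * (α - 1) * (Q a - ψ)) ^ (1 / (α - 1))) * Q a)
          - (1 / β) * ((1 / (α * (α - 1)))
              * ((∑ a, π0 a ^ (1 - α)
                  * (π0 a * (1 + β * (α - 1) * (Q a - ψ)) ^ (1 / (α - 1))) ^ α) - 1)) := by
  intro π hπ hsum
  set πs : A → ℝ := fun a => π0 a * (1 + β * (α - 1) * (Q a - ψ)) ^ (1 / (α - 1))
  set l := ψ - 1 / (β * (α - 1)) with hl
  have hπs : ∀ a, 0 < πs a := fun a => mul_pos (hπ0pos a) (Real.rpow_pos_of_pos (hpos a) _)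
  have hstationary : ∀ a, Q a - l = π0 a ^ (1 - α) / β * (πs a ^ (α - 1) / (α - 1)) := fun a => by
    rw [div_mul_div_comm,
      Real.rpow_one_sub_mul_mul_rpow_one_div_sub_one_rpow hα1 (hπ0pos a) (hpos a), hl]
    field_simp [sub_ne_zero.mpr hα1]
    ring
  change alphaRegObjective β α π0 Q π ≤ alphaRegObjective β α π0 Q πs
  rw [alphaRegObjective_eq_sum_add β α l π0 Q hsum, alphaRegObjective_eq_sum_add β α l π0 Q hnorm]
  gcongr ?_ + _ + _
  refine sum_le_sum fun a _ => ?_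
  exact Real.mul_sub_mul_rpow_div_le hα0 hα1 (div_nonneg (Real.rpow_nonneg (hπ0pos a).le _) hβ.le)
    (hπ a) (hπs a) (hstationary a)

/-- Optimality of the α-regularized policy: if `ψ : ℝ` satisfies
`1 + β (α-1) (Q(a) - ψ) > 0` for all `a` and
`π*(a) = π0(a) (1 + β (α-1) (Q(a) - ψ))^(1/(α-1))` sums to one, then `π*`
maximizes `⟨π, Q⟩ - (1/β) D_α[π0:π]` over strictly positive probability
distributions `π`, where
`D_α[π0:π] = (1/(α(α-1))) (∑ π0(a)^(1-α) π(a)^α - 1)`. -/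
theorem alpha_regularized_optimal_policy
    {A : Type*} [Fintype A] [Nonempty A]
    (β : ℝ) (hβ : 0 < β)
    (α : ℝ) (hα0 : α ≠ 0) (hα1 : α ≠ 1)
    (π0 : A → ℝ) (hπ0pos : ∀ a, 0 < π0 a) (hπ0sum : ∑ a, π0 a = 1)
    (Q : A → ℝ) (ψ : ℝ)
    (hpos : ∀ a, 0 < 1 + β * (α - 1) * (Q a - ψ))
    (hnorm : ∑ a, π0 a * (1 + β * (α - 1) * (Q a - ψ)) ^ (1 / (α - 1)) = 1) :
    ∀ π : A → ℝ, (∀ a, 0 < π a) → ∑ a, π a = 1 →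
      (∑ a, π a * Q a)
          - (1 / β) * ((1 / (α * (α - 1))) * ((∑ a, π0 a ^ (1 - α) * π a ^ α) - 1))
        ≤ (∑ a, (π0 a * (1 + β * (α - 1) * (Q a - ψ)) ^ (1 / (α - 1))) * Q a)
          - (1 / β) * ((1 / (α * (α - 1)))
              * ((∑ a, π0 a ^ (1 - α)
                  * (π0 a * (1 + β * (α - 1) * (Q a - ψ)) ^ (1 / (α - 1))) ^ α) - 1)) :=
  alpha_regularized_optimal_policy_general β hβ α hα0 hα1 π0 hπ0pos Q ψ hpos hnorm
end
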